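/- Let m ≥ 1, let γ_1, …, γ_m, γ̂_1, …, γ̂_m and φ be positive real numbers, and let s ∈ ℂ with Im s > 0. Define C_{m+1} = 1/(φ·√s), where √s is the principal complex square root, and C_i = 1/(s·γ̂_i + 1/(γ_i + C_{i+1})) for i = m, …, 1. Then for every i = 1, …, m+1 one has Im C_i < 0; in particular γ_i + C_{i+1} ≠ 0 and s·γ̂_i + 1/(γ_i + C_{i+1}) ≠ 0, so the recursion is well defined, and the scalar Kreĭn–Nudelman quadrature F̂^φ_m(s) = C_1 satisfies Im F̂^φ_m(s) < 0 (the Herglotz/Stieltjes property of Proposition 1, part 1, in the scalar case p = 1). -/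
import Mathlib


open Complex

/-- Tail values of the scalar Kreĭn–Nudelman continued fraction:
`knTail m γ γ̂ φ s k = C_{m+1-k}`, where `C_{m+1} = 1/(φ·√s)` (principal complex
square root) and `C_i = 1/(s·γ̂_i + 1/(γ_i + C_{i+1}))`. -/
noncomputable def knTail (m : ℕ) (γ γhat : ℕ → ℝ) (φ : ℝ) (s : ℂ) : ℕ → ℂ
  | 0 => 1 / ((φ : ℂ) * s ^ (1 / 2 : ℂ))
  | k + 1 =>
      1 / (s * (γhat (m - k) : ℂ) + 1 / ((γ (m - k) : ℂ) + knTail m γ γhat φ s k))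

/-- The scalar Kreĭn–Nudelman continued-fraction value `C_i`, `i = 1, …, m+1`. -/
noncomputable def knC (m : ℕ) (γ γhat : ℕ → ℝ) (φ : ℝ) (s : ℂ) (i : ℕ) : ℂ :=
  knTail m γ γhat φ s (m + 1 - i)

lemma sqrt_im_pos_of_im_pos {s : ℂ} (hs : 0 < s.im) : 0 < (s ^ (1 / 2 : ℂ)).im := by
  have hs0 : s ≠ 0 := fun h => by simp [h] at hs
  rw [Complex.cpow_def_of_ne_zero hs0, Complex.exp_im]
  have him : (Complex.log s * (1 / 2 : ℂ)).im = s.arg * (1 / 2) := by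
    simp [Complex.mul_im, Complex.log_im]
  have harg0 : 0 < s.arg := by
    rcases lt_of_le_of_ne (Complex.arg_nonneg_iff.2 hs.le) (fun h =>
      by have := (Complex.arg_eq_zero_iff.1 h.symm).2; linarith) with h
    exact h
  have hargpi : s.arg < Real.pi := Complex.arg_lt_pi_iff.2 (Or.inr (ne_of_gt hs))
  rw [him]
  have : 0 < Real.sin (s.arg * (1 / 2)) := by
    apply Real.sin_pos_of_pos_of_lt_pi
    · positivity
    · nlinarith [Real.pi_pos]
  positivity

lemma im_inv_neg {z : ℂ} (hz : 0 < z.im) : (1 / z).im < 0 := by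
  have hz0 : z ≠ 0 := fun h => by simp [h] at hz
  rw [one_div, Complex.inv_im]
  have : 0 < Complex.normSq z := Complex.normSq_pos.2 hz0
  exact div_neg_of_neg_of_pos (neg_neg_of_pos hz) this

lemma im_inv_pos {z : ℂ} (hz : z.im < 0) : 0 < (1 / z).im := by
  have hz0 : z ≠ 0 := fun h => by simp [h] at hz
  rw [one_div, Complex.inv_im]
  have : 0 < Complex.normSq z := Complex.normSq_pos.2 hz0
  exact div_pos (by linarith) this

lemma knTail_im_neg (m : ℕ) (γ γhat : ℕ → ℝ)
    (hγ : ∀ i, 1 ≤ i → i ≤ m → 0 < γ i)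
    (hγhat : ∀ i, 1 ≤ i → i ≤ m → 0 < γhat i)
    (φ : ℝ) (hφ : 0 < φ) (s : ℂ) (hs : 0 < s.im) :
    ∀ k, k ≤ m → (knTail m γ γhat φ s k).im < 0 := by
  intro k
  induction k with
  | zero =>
      intro _
      apply im_inv_neg
      have := sqrt_im_pos_of_im_pos hs
      simpa [Complex.mul_im] using mul_pos hφ this
  | succ k ih =>
      intro hk
      have hk' : k ≤ m := Nat.le_of_succ_le hk
      have h1 : 1 ≤ m - k := by omega
      have h2 : m - k ≤ m := by omega
      have hC : (knTail m γ γhat φ s k).im < 0 := ih hk'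
      have hden : ((γ (m - k) : ℂ) + knTail m γ γhat φ s k).im < 0 := by
        simpa using hC
      have hinv : 0 < (1 / ((γ (m - k) : ℂ) + knTail m γ γhat φ s k)).im :=
        im_inv_pos hden
      show (1 / (s * (γhat (m - k) : ℂ) +
          1 / ((γ (m - k) : ℂ) + knTail m γ γhat φ s k))).im < 0
      apply im_inv_neg
      have hsg : 0 < (s * (γhat (m - k) : ℂ)).im := by
        rw [Complex.mul_im]
        simp only [Complex.ofReal_re, Complex.ofReal_im, mul_zero, zero_add]
        exact mul_pos hs (hγhat _ h1 h2)
      simpa [Complex.add_im] using add_pos hsg hinv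

/-- **Herglotz/Stieltjes property of the scalar Kreĭn–Nudelman quadrature
(Proposition 1, part 1, scalar case `p = 1`).** For positive coefficients
`γ_i, γ̂_i, φ` and `Im s > 0`, every tail value satisfies `Im C_i < 0`; in
particular the denominators `γ_i + C_{i+1}` and `s·γ̂_i + 1/(γ_i + C_{i+1})` are
nonzero, so the recursion is well defined, and `Im F̂^φ_m(s) = Im C_1 < 0`. -/
theorem knC_im_neg
    (m : ℕ) (hm : 1 ≤ m) (γ γhat : ℕ → ℝ)
    (hγ : ∀ i, 1 ≤ i → i ≤ m → 0 < γ i)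
    (hγhat : ∀ i, 1 ≤ i → i ≤ m → 0 < γhat i)
    (φ : ℝ) (hφ : 0 < φ) (s : ℂ) (hs : 0 < s.im) :
    (∀ i, 1 ≤ i → i ≤ m + 1 → (knC m γ γhat φ s i).im < 0) ∧
      (∀ i, 1 ≤ i → i ≤ m →
        (γ i : ℂ) + knC m γ γhat φ s (i + 1) ≠ 0 ∧
        s * (γhat i : ℂ) + 1 / ((γ i : ℂ) + knC m γ γhat φ s (i + 1)) ≠ 0) ∧
      (knC m γ γhat φ s 1).im < 0 := by
  have key := knTail_im_neg m γ γhat hγ hγhat φ hφ s hs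
  have hall : ∀ i, 1 ≤ i → i ≤ m + 1 → (knC m γ γhat φ s i).im < 0 := by
    intro i h1 h2
    exact key (m + 1 - i) (by omega)
  refine ⟨hall, ?_, hall 1 le_rfl (by omega)⟩
  intro i h1 h2
  have hC : (knC m γ γhat φ s (i + 1)).im < 0 := hall (i + 1) (by omega) (by omega)
  have hden : ((γ i : ℂ) + knC m γ γhat φ s (i + 1)).im < 0 := by simpa using hC
  refine ⟨fun h => by simp [h] at hden, fun h => ?_⟩
  have hinv : 0 < (1 / ((γ i : ℂ) + knC m γ γhat φ s (i + 1))).im := im_inv_pos hden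
  have hsg : 0 < (s * (γhat i : ℂ)).im := by
    rw [Complex.mul_im]
    simp only [Complex.ofReal_re, Complex.ofReal_im, mul_zero, zero_add]
    exact mul_pos hs (hγhat _ h1 h2)
  have : 0 < (s * (γhat i : ℂ) + 1 / ((γ i : ℂ) + knC m γ γhat φ s (i + 1))).im := by
    simpa [Complex.add_im] using add_pos hsg hinv
  rw [h] at this
  simp at this
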